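/- Let (V1, V2) be a compact normal pair on a complex Hilbert space H, and let f ∈ E_1 = ker(C(V1, V2) − I) be an eigenvector of the cross-commutator [V2*, V1]. Then the closed subspace H_f, defined as the closure of the linear span of {V1^m V2^n f : m, n ≥ 0}, reduces (V1, V2), i.e. H_f is invariant under V1, V2, V1*, and V2*. -/

import Mathlib

/-!
Since `V₁*` and `V₂*` are contractions, `C f = f` forces `V₁* f = V₂* f = 0`. The
cross-commutator `T = [V₂*, V₁]` kills the range of `V₂`, and `T* = [V₁*, V₂]` kills the range
of `V₁`; as `‖T x‖ = ‖T* x‖` for normal `T`, both kill both ranges, and `T f = μ f` gives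
`T* f = μ̄ f`. Thus `V₂*` commutes with `V₁` on the range of `V₁` and `V₂* V₁ f = μ f`, so `V₂*`
sends `V₁^m V₂^n f` to `V₁^m V₂^(n-1) f`, to `μ V₁^(m-1) f` or to `0`; symmetrically for `V₁*`.
Hence the span of these vectors reduces the pair, and so does its closure.
-/

open ContinuousLinearMap

section Defs

variable {H : Type*} [NormedAddCommGroup H] [InnerProductSpace ℂ H] [CompleteSpace H]

/-- The defect operator `C(V₁, V₂) = I - V₁V₁* - V₂V₂* + V₁V₂V₁*V₂*` of a pair of
operators on a complex Hilbert space. -/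
noncomputable def defectOp (V₁ V₂ : H →L[ℂ] H) : H →L[ℂ] H :=
  1 - V₁ ∘L adjoint V₁ - V₂ ∘L adjoint V₂ + V₁ ∘L V₂ ∘L adjoint V₁ ∘L adjoint V₂

/-- The cross-commutator `[V₂*, V₁] = V₂*V₁ - V₁V₂*`. -/
noncomputable def crossComm (V₁ V₂ : H →L[ℂ] H) : H →L[ℂ] H :=
  adjoint V₂ ∘L V₁ - V₁ ∘L adjoint V₂

/-- An isometric pair: both operators are isometries and they commute. -/
def IsIsometricPair (V₁ V₂ : H →L[ℂ] H) : Prop :=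
  (∀ x : H, ‖V₁ x‖ = ‖x‖) ∧ (∀ x : H, ‖V₂ x‖ = ‖x‖) ∧ V₁ ∘L V₂ = V₂ ∘L V₁

/-- A shift: an isometry `V` such that `(V*)^n x → 0` for every `x`. -/
def IsShift (V : H →L[ℂ] H) : Prop :=
  (∀ x : H, ‖V x‖ = ‖x‖) ∧
    ∀ x : H, Filter.Tendsto (fun n : ℕ => (adjoint V ^ n) x) Filter.atTop (nhds 0)

/-- A BCL pair: an isometric pair whose product is a shift. -/
def IsBCLPair (V₁ V₂ : H →L[ℂ] H) : Prop :=
  IsIsometricPair V₁ V₂ ∧ IsShift (V₁ ∘L V₂)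

/-- A compact normal pair: a BCL pair whose cross-commutator is compact and normal. -/
def IsCompactNormalPair (V₁ V₂ : H →L[ℂ] H) : Prop :=
  IsBCLPair V₁ V₂ ∧ IsCompactOperator ⇑(crossComm V₁ V₂) ∧
    crossComm V₁ V₂ ∘L adjoint (crossComm V₁ V₂) =
      adjoint (crossComm V₁ V₂) ∘L crossComm V₁ V₂

/-- A subspace reduces the pair `(V₁, V₂)` if it is invariant under `V₁, V₂, V₁*, V₂*`. -/
def ReducesPair (V₁ V₂ : H →L[ℂ] H) (S : Submodule ℂ H) : Prop :=
  (∀ x ∈ S, V₁ x ∈ S) ∧ (∀ x ∈ S, V₂ x ∈ S) ∧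
    (∀ x ∈ S, adjoint V₁ x ∈ S) ∧ (∀ x ∈ S, adjoint V₂ x ∈ S)

/-- A pair is irreducible if its only closed reducing subspaces are `⊥` and `⊤`. -/
def IsIrreduciblePair (V₁ V₂ : H →L[ℂ] H) : Prop :=
  ∀ S : Submodule ℂ H, IsClosed (S : Set H) → ReducesPair V₁ V₂ S → S = ⊥ ∨ S = ⊤

/-- An `n`-finite pair: a compact normal pair whose defect operator has `n`-dimensional
range. -/
def IsNFinitePair (n : ℕ) (V₁ V₂ : H →L[ℂ] H) : Prop :=
  IsCompactNormalPair V₁ V₂ ∧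
    Module.rank ℂ (LinearMap.range (defectOp V₁ V₂).toLinearMap) = n

end Defs

open scoped ComplexConjugate InnerProductSpace

section Normal

variable {𝕜 E : Type*} [RCLike 𝕜] [NormedAddCommGroup E] [InnerProductSpace 𝕜 E]
  [CompleteSpace E]

theorem ContinuousLinearMap.adjoint_apply_apply_of_norm_map {V : E →L[𝕜] E}
    (hV : ∀ x, ‖V x‖ = ‖x‖) (x : E) : adjoint V (V x) = x := by
  rw [← comp_apply, (norm_map_iff_adjoint_comp_self V).1 hV, one_apply_eq_self]

theorem ContinuousLinearMap.IsStarNormal.adjoint_apply_eq_of_apply_eq_smul {T : E →L[𝕜] E}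
    (hT : IsStarNormal T) {μ : 𝕜} {x : E} (hx : T x = μ • x) :
    adjoint T x = conj μ • x := by
  have hS : IsStarNormal (T - μ • 1) :=
    Commute.isStarNormal_sub <| by
      rw [star_smul, star_one]; exact (Commute.one_right T).smul_right _
  have := (hS.adjoint_apply_eq_zero_iff x).2 (by simp [hx])
  simpa [star_eq_adjoint, sub_eq_zero, map_smulₛₗ, adjoint_one] using this

end Normal

section BiorbitSpan

variable {𝕜 E : Type*} [NontriviallyNormedField 𝕜] [NormedAddCommGroup E] [NormedSpace 𝕜 E]
  {A B L : E →L[𝕜] E} {f : E}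

def biorbitSpan (A B : E →L[𝕜] E) (f : E) : Submodule 𝕜 E :=
  Submodule.span 𝕜 (Set.range fun p : ℕ × ℕ => (A ^ p.1) ((B ^ p.2) f))

theorem pow_apply_pow_apply_mem_biorbitSpan (m n : ℕ) :
    (A ^ m) ((B ^ n) f) ∈ biorbitSpan A B f :=
  Submodule.subset_span ⟨(m, n), rfl⟩

theorem biorbitSpan_le_of_commute (h : Commute A B) : biorbitSpan A B f ≤ biorbitSpan B A f := by
  refine Submodule.span_le.2 ?_
  rintro _ ⟨⟨m, n⟩, rfl⟩
  change (A ^ m) ((B ^ n) f) ∈ _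
  rw [← mul_apply_eq_comp, (h.pow_pow m n).eq, mul_apply_eq_comp]
  exact pow_apply_pow_apply_mem_biorbitSpan n m

theorem biorbitSpan_comm (h : Commute A B) : biorbitSpan A B f = biorbitSpan B A f :=
  le_antisymm (biorbitSpan_le_of_commute h) (biorbitSpan_le_of_commute h.symm)

theorem mapsTo_biorbitSpan (h : ∀ m n, L ((A ^ m) ((B ^ n) f)) ∈ biorbitSpan A B f) :
    Set.MapsTo L (biorbitSpan A B f) (biorbitSpan A B f) := by
  have : biorbitSpan A B f ≤ (biorbitSpan A B f).comap (L : E →ₗ[𝕜] E) := by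
    refine Submodule.span_le.2 ?_
    rintro _ ⟨⟨m, n⟩, rfl⟩
    exact h m n
  exact fun x hx => this hx

theorem mapsTo_left_biorbitSpan : Set.MapsTo A (biorbitSpan A B f) (biorbitSpan A B f) :=
  mapsTo_biorbitSpan fun m n => by
    simpa only [pow_succ', mul_apply_eq_comp] using pow_apply_pow_apply_mem_biorbitSpan (m + 1) n

theorem apply_pow_succ_apply_of_apply_eq_smul (hLB : ∀ x, L (B (B x)) = B (L (B x))) {c : 𝕜}
    (hLf : L (B f) = c • f) (n : ℕ) : L ((B ^ (n + 1)) f) = c • (B ^ n) f := by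
  induction n with
  | zero => simpa using hLf
  | succ n ih => calc
      L ((B ^ (n + 2)) f) = L (B (B ((B ^ n) f))) := by
        rw [pow_succ', pow_succ', mul_apply_eq_comp, mul_apply_eq_comp]
      _ = B (L ((B ^ (n + 1)) f)) := by rw [hLB, pow_succ', mul_apply_eq_comp]
      _ = c • (B ^ (n + 1)) f := by rw [ih, map_smul, pow_succ', mul_apply_eq_comp]

theorem mapsTo_biorbitSpan_of_leftInverse (hLA : ∀ x, L (A x) = x) (hLf₀ : L f = 0)
    (hLB : ∀ x, L (B (B x)) = B (L (B x))) {c : 𝕜} (hLf : L (B f) = c • f) :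
    Set.MapsTo L (biorbitSpan A B f) (biorbitSpan A B f) :=
  mapsTo_biorbitSpan fun
    | m + 1, n => by
      rw [pow_succ', mul_apply_eq_comp, hLA]
      exact pow_apply_pow_apply_mem_biorbitSpan m n
    | 0, 0 => by simp [hLf₀]
    | 0, n + 1 => by
      rw [pow_zero, one_apply_eq_self, apply_pow_succ_apply_of_apply_eq_smul hLB hLf]
      exact Submodule.smul_mem _ _ (pow_apply_pow_apply_mem_biorbitSpan 0 n)

end BiorbitSpan

section Pair

variable {H : Type*} [NormedAddCommGroup H] [InnerProductSpace ℂ H] [CompleteSpace H]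
  {V₁ V₂ : H →L[ℂ] H} {f : H}

theorem adjoint_crossComm (V₁ V₂ : H →L[ℂ] H) :
    adjoint (crossComm V₁ V₂) = crossComm V₂ V₁ := by
  simp [crossComm, adjoint_comp]

theorem crossComm_apply_right_eq_zero (h₂ : ∀ x, ‖V₂ x‖ = ‖x‖) (hc : V₁ ∘L V₂ = V₂ ∘L V₁)
    (x : H) : crossComm V₁ V₂ (V₂ x) = 0 := by
  rw [crossComm, sub_apply, comp_apply, comp_apply, ← comp_apply V₁ V₂, hc, comp_apply,
    adjoint_apply_apply_of_norm_map h₂, adjoint_apply_apply_of_norm_map h₂, sub_self]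

theorem adjoint_apply_eq_zero_of_defectOp_apply_eq_self (h₁ : ‖V₁‖ ≤ 1) (h₂ : ‖V₂‖ ≤ 1)
    (hf : defectOp V₁ V₂ f = f) : adjoint V₁ f = 0 ∧ adjoint V₂ f = 0 := by
  have hadj {V : H →L[ℂ] H} (hV : ‖V‖ ≤ 1) (y : H) : ‖adjoint V y‖ ≤ ‖y‖ := by
    simpa using (adjoint V).le_of_opNorm_le (c := 1) (by rwa [LinearIsometryEquiv.norm_map]) y
  have hsq (V : H →L[ℂ] H) : RCLike.re ⟪f, V (adjoint V f)⟫_ℂ = ‖adjoint V f‖ ^ 2 := by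
    rw [← adjoint_inner_left, inner_self_eq_norm_sq]
  set a := ‖adjoint V₁ f‖
  set b := ‖adjoint V₂ f‖
  have hf' : V₁ (adjoint V₁ f) + V₂ (adjoint V₂ f) = V₁ (V₂ (adjoint V₁ (adjoint V₂ f))) := by
    simp only [defectOp, add_apply, sub_apply, one_apply_eq_self, comp_apply] at hf
    linear_combination (norm := abel) -hf
  have hcross : RCLike.re ⟪f, V₁ (V₂ (adjoint V₁ (adjoint V₂ f)))⟫_ℂ ≤ a * b := calc
    _ = RCLike.re ⟪adjoint V₂ (adjoint V₁ f), adjoint V₁ (adjoint V₂ f)⟫_ℂ := by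
      rw [← adjoint_inner_left, ← adjoint_inner_left]
    _ ≤ ‖adjoint V₂ (adjoint V₁ f)‖ * ‖adjoint V₁ (adjoint V₂ f)‖ := re_inner_le_norm _ _
    _ ≤ a * b := mul_le_mul (hadj h₂ _) (hadj h₁ _) (norm_nonneg _) (norm_nonneg _)
  have hab : a ^ 2 + b ^ 2 ≤ a * b := by
    rw [← hsq, ← hsq, ← map_add, ← inner_add_right, hf']
    exact hcross
  constructor <;> rw [← norm_eq_zero] <;> nlinarith [sq_nonneg (a - b), norm_nonneg (adjoint V₁ f),
    norm_nonneg (adjoint V₂ f)]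

theorem ReducesPair.topologicalClosure {S : Submodule ℂ H} (h : ReducesPair V₁ V₂ S) :
    ReducesPair V₁ V₂ S.topologicalClosure := by
  obtain ⟨h₁, h₂, h₁', h₂'⟩ := h
  exact ⟨Set.MapsTo.closure h₁ V₁.continuous, Set.MapsTo.closure h₂ V₂.continuous,
    Set.MapsTo.closure h₁' (adjoint V₁).continuous, Set.MapsTo.closure h₂' (adjoint V₂).continuous⟩

theorem mapsTo_adjoint_biorbitSpan (h₁ : ∀ x, ‖V₁ x‖ = ‖x‖) (hf : adjoint V₁ f = 0)
    (hT : ∀ x, crossComm V₂ V₁ (V₂ x) = 0) {c : ℂ} (hTf : crossComm V₂ V₁ f = c • f) :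
    Set.MapsTo (adjoint V₁) (biorbitSpan V₁ V₂ f) (biorbitSpan V₁ V₂ f) :=
  mapsTo_biorbitSpan_of_leftInverse (adjoint_apply_apply_of_norm_map h₁) hf
    (fun x => sub_eq_zero.1 (by simpa [crossComm] using hT x))
    (by simpa [crossComm, hf] using hTf)

end Pair

theorem stmt_16_general {H : Type*} [NormedAddCommGroup H] [InnerProductSpace ℂ H] [CompleteSpace H]
    (V₁ V₂ : H →L[ℂ] H)
    (hcnp : IsCompactNormalPair V₁ V₂)
    (f : H) (hf : f ∈ LinearMap.ker (defectOp V₁ V₂ - 1 : H →L[ℂ] H).toLinearMap)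
    (heig : ∃ μ : ℂ, crossComm V₁ V₂ f = μ • f) :
    ReducesPair V₁ V₂
      (Submodule.span ℂ
        (Set.range fun p : ℕ × ℕ => (V₁ ^ p.1) ((V₂ ^ p.2) f))).topologicalClosure := by
  obtain ⟨⟨⟨h₁, h₂, hc⟩, -⟩, -, hnormal⟩ := hcnp
  obtain ⟨μ, hμ⟩ := heig
  have hT : IsStarNormal (crossComm V₁ V₂) := ⟨hnormal.symm⟩
  have hopNorm {V : H →L[ℂ] H} (hV : ∀ x, ‖V x‖ = ‖x‖) : ‖V‖ ≤ 1 :=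
    V.opNorm_le_bound zero_le_one fun x => by rw [hV, one_mul]
  obtain ⟨hf₁, hf₂⟩ := adjoint_apply_eq_zero_of_defectOp_apply_eq_self (hopNorm h₁) (hopNorm h₂)
    (sub_eq_zero.1 hf)
  have hT₂ : ∀ x, crossComm V₁ V₂ (V₂ x) = 0 := crossComm_apply_right_eq_zero h₂ hc
  have hT'₁ : ∀ x, crossComm V₂ V₁ (V₁ x) = 0 := crossComm_apply_right_eq_zero h₁ hc.symm
  have hT₁ (x : H) : crossComm V₁ V₂ (V₁ x) = 0 := by
    rw [← hT.adjoint_apply_eq_zero_iff, adjoint_crossComm, hT'₁]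
  have hT'₂ (x : H) : crossComm V₂ V₁ (V₂ x) = 0 := by
    rw [← adjoint_crossComm, hT.adjoint_apply_eq_zero_iff, hT₂]
  have hμ' : crossComm V₂ V₁ f = conj μ • f :=
    adjoint_crossComm V₁ V₂ ▸ hT.adjoint_apply_eq_of_apply_eq_smul hμ
  have hcomm : Commute V₁ V₂ := hc
  refine ReducesPair.topologicalClosure (S := biorbitSpan V₁ V₂ f)
    ⟨mapsTo_left_biorbitSpan, ?_, mapsTo_adjoint_biorbitSpan h₁ hf₁ hT'₂ hμ', ?_⟩ <;>
    rw [biorbitSpan_comm hcomm]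
  exacts [mapsTo_left_biorbitSpan, mapsTo_adjoint_biorbitSpan h₂ hf₂ hT₁ hμ]

/-- For a compact normal pair, the closed subspace generated by an
eigenvector `f ∈ E₁` of the cross-commutator under `V₁, V₂` reduces the pair. -/
theorem stmt_16 {H : Type*} [NormedAddCommGroup H] [InnerProductSpace ℂ H] [CompleteSpace H]
    (V₁ V₂ : H →L[ℂ] H)
    (hcnp : IsCompactNormalPair V₁ V₂)
    (f : H) (hf : f ∈ LinearMap.ker (defectOp V₁ V₂ - 1 : H →L[ℂ] H).toLinearMap) (hf0 : f ≠ 0)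
    (heig : ∃ μ : ℂ, crossComm V₁ V₂ f = μ • f) :
    ReducesPair V₁ V₂
      (Submodule.span ℂ
        (Set.range fun p : ℕ × ℕ => (V₁ ^ p.1) ((V₂ ^ p.2) f))).topologicalClosure :=
  stmt_16_general V₁ V₂ hcnp f hf heig
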